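/- Let 𝒯 = {𝒯⁽¹⁾,…,𝒯⁽ᵏ⁾} be a set of k unrooted phylogenetic trees, none having a vertex of degree two, and let 𝒪 be the set of all sub-forests of all rooted variants of 𝒯. Then a set of rooted trees 𝒜 = {𝒜⁽¹⁾,…,𝒜⁽ᵏ⁾} (with at least one nonempty element) belongs to 𝒪 if and only if each 𝒜⁽ⁱ⁾ is either a trivial tree (a leaf or the empty tree) or a maximal subtree of 𝒯⁽ⁱ⁾. -/

import Mathlib

/-- Rooted, unordered, leaf-labelled trees:
a tree is a single labelled leaf, or an (internal) root node with a list of subtrees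
attached to it.  Being unordered, such trees are considered up to the
isomorphism `PTree.Iso` below.  The empty tree is represented by `none` in
`Option (PTree α)`. -/
inductive PTree (α : Type) : Type where
  | leaf : α → PTree α
  | node : List (PTree α) → PTree α

namespace PTree

variable {α : Type} [DecidableEq α]

theorem sizeOf_lt_of_mem {α : Type} {c : PTree α} {cs : List (PTree α)}
    (h : c ∈ cs) : sizeOf c < sizeOf (PTree.node cs) := by
  have := List.sizeOf_lt_of_mem h
  simp only [node.sizeOf_spec]; omega

/-- `Subtree s t` : `s` is the complete subtree rooted at some node of `t`. -/
inductive Subtree : PTree α → PTree α → Prop where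
  | refl (t : PTree α) : Subtree t t
  | child {s c : PTree α} {cs : List (PTree α)} :
      c ∈ cs → Subtree s c → Subtree s (node cs)

/-- The list of leaf labels of a tree. -/
def labelList : PTree α → List α
  | leaf a => [a]
  | node cs => cs.attach.flatMap (fun c => labelList c.1)
decreasing_by exact sizeOf_lt_of_mem c.2

/-- The set `L(T)` of leaf labels of a tree. -/
def labels (t : PTree α) : Finset α := t.labelList.toFinset

/-- The size of a tree: the number of its leaves. -/
def treeSize (t : PTree α) : ℕ := t.labels.card

/-- The label set of a possibly empty tree. -/
def olabels : Option (PTree α) → Finset α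
  | none => ∅
  | some t => t.labels

/-- Connecting a list of trees by a common root.  The empty list yields the
empty tree and a single tree yields that tree itself (no degree-two node is
created). -/
def connect : List (PTree α) → Option (PTree α)
  | [] => none
  | [t] => some t
  | ts => some (node ts)

/-- The restriction `T|S` of `T` to a label set `S`: all leaves with labels
outside `S` are removed and all internal nodes of degree two are suppressed. -/
def restrict (S : Finset α) : PTree α → Option (PTree α)
  | leaf a => if a ∈ S then some (leaf a) else none
  | node cs => connect ((cs.attach.map (fun c => restrict S c.1)).reduceOption)
decreasing_by exact sizeOf_lt_of_mem c.2

/-- Restriction of a possibly empty tree. -/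
def orestrict (S : Finset α) (t : Option (PTree α)) : Option (PTree α) :=
  t.bind (restrict S)

/-- Isomorphism (equality) of unordered leaf-labelled trees: equality of trees
up to reordering of the children of each node. -/
inductive Iso : PTree α → PTree α → Prop where
  | leaf (a : α) : Iso (leaf a) (leaf a)
  | node {cs ds ds' : List (PTree α)} :
      List.Forall₂ Iso cs ds' → ds'.Perm ds → Iso (node cs) (node ds)

/-- One edge contraction: the edge between a node and one of its (internal)
children is contracted, merging the child into the parent. -/
inductive Contract : PTree α → PTree α → Prop where
  | top (l r ds : List (PTree α)) :
      Contract (node (l ++ node ds :: r)) (node (l ++ ds ++ r))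
  | child {c c' : PTree α} (l r : List (PTree α)) :
      Contract c c' → Contract (node (l ++ c :: r)) (node (l ++ c' :: r))

/-- `T` refines `T'` (written `T ⊵ T'`): `T'` can be obtained (as an
unordered tree) by contracting some edges of `T`. -/
def Refines (t t' : PTree α) : Prop :=
  ∃ u, Relation.ReflTransGen Contract t u ∧ Iso u t'

/-- Refinement of possibly empty trees. -/
def ORefines : Option (PTree α) → Option (PTree α) → Prop
  | none, none => True
  | some a, some b => Refines a b
  | _, _ => False

/-- Isomorphism (equality) of possibly empty unordered trees. -/
def OIso : Option (PTree α) → Option (PTree α) → Prop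
  | none, none => True
  | some a, some b => Iso a b
  | _, _ => False

/-- A possibly empty tree is (empty or) a complete subtree of `T`. -/
def OSubtree (T : PTree α) : Option (PTree α) → Prop
  | none => True
  | some t => Subtree t T

/-- No internal node of degree two (after the usual suppression convention):
every internal node of the rooted tree has at least two children. -/
def NoUnaryNodes (T : PTree α) : Prop :=
  ∀ cs : List (PTree α), Subtree (node cs) T → 2 ≤ cs.length

/-- Every node of the rooted tree has degree at most `D` (the degree of the
root is its number of children; the degree of any other internal node is its
number of children plus one). -/
def DegLE (D : ℕ) (T : PTree α) : Prop :=
  (∀ cs : List (PTree α), T = node cs → cs.length ≤ D) ∧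
  (∀ cs : List (PTree α), Subtree (node cs) T → node cs ≠ T → cs.length + 1 ≤ D)

/-- A rooted tree is binary if every internal node has exactly two children. -/
def Binary (T : PTree α) : Prop :=
  ∀ cs : List (PTree α), Subtree (node cs) T → cs.length = 2

/-- A cut-subtree of `T`: the empty tree, or the tree obtained by selecting
some (at least one) of the subtrees attached to an internal node of `T` and
connecting those subtrees by a common root. -/
def IsCutSubtree (T : PTree α) (a : Option (PTree α)) : Prop :=
  a = none ∨ ∃ cs sel : List (PTree α),
    Subtree (node cs) T ∧ sel.Sublist cs ∧ sel ≠ [] ∧ a = connect sel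

variable {k : ℕ}

/-- A cut-subforest of `𝒯`: each component is a cut-subtree of the
corresponding tree, and at least one component is nonempty. -/
def IsCutSubforest (𝒯 : Fin k → PTree α) (A : Fin k → Option (PTree α)) : Prop :=
  (∀ i, IsCutSubtree (𝒯 i) (A i)) ∧ ∃ i, A i ≠ none

/-- A sub-forest of `𝒯`: each component is the empty tree or a complete
subtree rooted at some node of the corresponding tree, and at least one
component is nonempty. -/
def IsSubForest (𝒯 : Fin k → PTree α) (A : Fin k → Option (PTree α)) : Prop :=
  (∀ i, OSubtree (𝒯 i) (A i)) ∧ ∃ i, A i ≠ none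

/-- The set of all labels occurring in the trees of `𝒯`. -/
def allLabels (𝒯 : Fin k → PTree α) : Finset α :=
  Finset.univ.biUnion fun i => (𝒯 i).labels

/-- A (cut-sub)forest is terminal if each component is the empty tree or a
single leaf of the corresponding tree. -/
def IsTerminal (𝒯 : Fin k → PTree α) (A : Fin k → Option (PTree α)) : Prop :=
  ∀ i, A i = none ∨ ∃ a : α, A i = some (leaf a) ∧ Subtree (leaf a) (𝒯 i)

/-- `Λ(𝒜) = { l ∈ ⋃_j L(𝒜⁽ʲ⁾) ∣ ∀ i, l ∉ L(𝒯⁽ⁱ⁾) − L(𝒜⁽ⁱ⁾) }`. -/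
def lambdaSet (𝒯 : Fin k → PTree α) (A : Fin k → Option (PTree α)) : Finset α :=
  (Finset.univ.biUnion fun j => olabels (A j)).filter
    fun l => ∀ i, l ∉ (𝒯 i).labels \ olabels (A i)

/-- `Y` is a compatible supertree of the forest `A`:
`Y|L(A⁽ⁱ⁾) ⊵ A⁽ⁱ⁾|L(Y)` for every `i`. -/
def IsCompatibleSupertree (A : Fin k → Option (PTree α)) (Y : PTree α) : Prop :=
  ∀ i, ORefines (restrict (olabels (A i)) Y) (orestrict Y.labels (A i))

/-- `X` is an agreement supertree of the forest `A`:
`X|L(A⁽ⁱ⁾) = A⁽ⁱ⁾|L(X)` (as unordered trees) for every `i`. -/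
def IsAgreementSupertree (A : Fin k → Option (PTree α)) (X : PTree α) : Prop :=
  ∀ i, OIso (restrict (olabels (A i)) X) (orestrict X.labels (A i))

/-- An embedded supertree of a cut-subforest `A` of `𝒯`: a distinctly
leaf-labelled compatible supertree `Y` of `A`, with leaves labelled by labels
of `𝒯`, such that `L(Y) ∩ L(𝒯⁽ⁱ⁾) ⊆ L(A⁽ⁱ⁾)` for all `i`. -/
def IsEmbeddedSupertree (𝒯 : Fin k → PTree α) (A : Fin k → Option (PTree α))
    (Y : PTree α) : Prop :=
  Y.labelList.Nodup ∧ Y.labels ⊆ allLabels 𝒯 ∧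
  IsCompatibleSupertree A Y ∧
  ∀ i, Y.labels ∩ (𝒯 i).labels ⊆ olabels (A i)

/-- An enclosed supertree of a sub-forest `A` of `𝒯`: a distinctly
leaf-labelled agreement supertree `X` of `A`, with leaves labelled by labels
of `𝒯`, such that `L(X) ∩ L(𝒯⁽ⁱ⁾) ⊆ L(A⁽ⁱ⁾)` for all `i`. -/
def IsEnclosedSupertree (𝒯 : Fin k → PTree α) (A : Fin k → Option (PTree α))
    (X : PTree α) : Prop :=
  X.labelList.Nodup ∧ X.labels ⊆ allLabels 𝒯 ∧
  IsAgreementSupertree A X ∧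
  ∀ i, X.labels ∩ (𝒯 i).labels ⊆ olabels (A i)

/-- `mcsp 𝒯 A` : the maximum size of an embedded supertree of `A`. -/
noncomputable def mcsp (𝒯 : Fin k → PTree α) (A : Fin k → Option (PTree α)) : ℕ :=
  sSup {m : ℕ | ∃ Y : PTree α, IsEmbeddedSupertree 𝒯 A Y ∧ m = Y.treeSize}

/-- `masp 𝒯 A` : the maximum size of an enclosed supertree of `A`. -/
noncomputable def masp (𝒯 : Fin k → PTree α) (A : Fin k → Option (PTree α)) : ℕ :=
  sSup {m : ℕ | ∃ X : PTree α, IsEnclosedSupertree 𝒯 A X ∧ m = X.treeSize}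

end PTree

/-- `ListSplit s l r` : the list `s` is partitioned into the two
(complementary) sublists `l` and `r`. -/
inductive ListSplit {β : Type} : List β → List β → List β → Prop where
  | nil : ListSplit [] [] []
  | left {s l r : List β} (x : β) : ListSplit s l r → ListSplit (x :: s) (x :: l) r
  | right {s l r : List β} (x : β) : ListSplit s l r → ListSplit (x :: s) l (x :: r)

namespace PTree

variable {α : Type} [DecidableEq α] {k : ℕ}

/-- `(AL, AR)` is a bipartite of the forest `A`: for every `i` the set of
subtrees attached to the root of `A⁽ⁱ⁾` is partitioned into two sets, each of
which is connected by a common root to form `AL⁽ⁱ⁾` resp. `AR⁽ⁱ⁾` (an empty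
set of subtrees yielding the empty tree). -/
def IsBipartite (A AL AR : Fin k → Option (PTree α)) : Prop :=
  ∀ i, ∃ s sL sR : List (PTree α),
    A i = connect s ∧ ListSplit s sL sR ∧ AL i = connect sL ∧ AR i = connect sR

/-- Condition, at one component, for `(b 1, …, b d)` to decompose `a`:
either exactly one `b j` is isomorphic to `a` and the others are empty, or at
least two of the `b j` are nonempty and the nonempty ones are isomorphic to
pairwise distinct subtrees attached to the root of `a`. -/
def DecompAt {d : ℕ} (a : Option (PTree α)) (b : Fin d → Option (PTree α)) : Prop :=
  (∃ j, OIso (b j) a ∧ ∀ j', j' ≠ j → b j' = none) ∨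
  (∃ cs : List (PTree α), a = some (node cs) ∧
    2 ≤ (Finset.univ.filter fun j => (b j).isSome).card ∧
    ∃ idx : Fin d → Option (Fin cs.length),
      (∀ j, b j = none ↔ idx j = none) ∧
      (∀ j t m, b j = some t → idx j = some m → Iso t (cs.get m)) ∧
      (∀ j j' m, idx j = some m → idx j' = some m → j = j'))

/-- `(B 1, …, B d)` is a decomposition of the forest `A` (each `B j` being a
possibly empty sub-forest of `𝒯`). -/
def IsDecomposition (𝒯 : Fin k → PTree α) (A : Fin k → Option (PTree α))
    (d : ℕ) (B : Fin d → Fin k → Option (PTree α)) : Prop :=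
  2 ≤ d ∧ (∀ j i, OSubtree (𝒯 i) (B j i)) ∧ ∀ i, DecompAt (A i) fun j => B j i

/-- The root of the (nonempty) cut-subtree `a` is an internal node of `T`,
i.e. `a` is the complete subtree of `T` rooted at an internal node of `T`. -/
def InternalRooted (T : PTree α) : Option (PTree α) → Prop
  | none => False
  | some t => (∃ cs : List (PTree α), t = node cs) ∧ Subtree t T

/-- One rerooting step: the root is moved to an adjacent internal node. -/
inductive Reroot1 : PTree α → PTree α → Prop where
  | step (l r ds : List (PTree α)) :
      Reroot1 (node (l ++ node ds :: r)) (node (ds ++ [node (l ++ r)]))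

/-- `F` is a rooted variant of the unrooted tree (represented by) `T`:
`F` is obtained by rooting `T` at some internal node. -/
def RootedVariant (T F : PTree α) : Prop := Relation.ReflTransGen Reroot1 T F

/-- A maximal subtree of the unrooted tree (represented by) `T`: a rooted tree
obtained by first rooting `T` at some internal node and then removing at most
one nontrivial subtree attached to that node. -/
def IsMaximalSubtree (T A : PTree α) : Prop :=
  ∃ cs : List (PTree α), RootedVariant T (node cs) ∧
    (A = node cs ∨ ∃ l r ds : List (PTree α), cs = l ++ node ds :: r ∧ A = node (l ++ r))

/-- `T` (a rooted tree, rooted at an internal node) represents an unrooted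
tree without vertices of degree two: the root has at least three neighbours
and every other internal vertex has at least three neighbours as well. -/
def IsUnrootedRep (T : PTree α) : Prop :=
  (∃ cs : List (PTree α), T = node cs ∧ 3 ≤ cs.length) ∧
  ∀ cs : List (PTree α), Subtree (node cs) T → node cs ≠ T → 2 ≤ cs.length

end PTree

/-!
Rerooting only moves the root, so every rooted variant of `T` has the leaves of `T`. A complete
subtree of a rooted variant `F` at an internal node `v` is either `F` itself, or, after rerooting
`F` at `v`, what remains when the single new child holding everything outside it is removed.
Conversely, removing a child `node ds` of the root of a rooted variant leaves a complete subtree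
of the variant rerooted at `node ds`.
-/

namespace PTree

variable {α : Type}

theorem Subtree.exists_child_of_ne {s t : PTree α} (h : Subtree s t) (hne : s ≠ t) :
    ∃ cs c, t = node cs ∧ c ∈ cs ∧ Subtree s c := by
  cases h with
  | refl => exact absurd rfl hne
  | child hc hs => exact ⟨_, _, rfl, hc, hs⟩

theorem Reroot1.subtree_leaf {u v : PTree α} (h : Reroot1 u v) {a : α}
    (hv : Subtree (leaf a) v) : Subtree (leaf a) u := by
  obtain ⟨l, r, ds⟩ := h
  obtain ⟨_, c, hcs, hc, hac⟩ := hv.exists_child_of_ne (by simp)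
  cases hcs
  rcases List.mem_append.1 hc with hc | hc
  · exact .child (by simp) (.child hc hac)
  · obtain rfl := List.mem_singleton.1 hc
    obtain ⟨_, c', hcs, hc', hac'⟩ := hac.exists_child_of_ne (by simp)
    cases hcs
    exact .child (by simp at hc' ⊢; tauto) hac'

theorem RootedVariant.subtree_leaf {T F : PTree α} (h : RootedVariant T F) {a : α}
    (hF : Subtree (leaf a) F) : Subtree (leaf a) T := by
  induction h with
  | refl => exact hF
  | tail _ hstep ih => exact ih (hstep.subtree_leaf hF)

theorem Subtree.exists_reroot_of_mem {ds : List (PTree α)} {c : PTree α}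
    (h : Subtree (node ds) c) {cs : List (PTree α)} (hc : c ∈ cs) :
    ∃ rest, RootedVariant (node cs) (node (ds ++ [node rest])) := by
  induction h generalizing cs with
  | refl =>
    obtain ⟨l, r, rfl⟩ := List.append_of_mem hc
    exact ⟨l ++ r, .single (Reroot1.step l r ds)⟩
  | @child c' cs' hc' _ ih =>
    obtain ⟨l, r, rfl⟩ := List.append_of_mem hc
    obtain ⟨rest, hrest⟩ := ih (cs := cs' ++ [node (l ++ r)]) (by simp [hc'])
    exact ⟨rest, .head (Reroot1.step l r cs') hrest⟩

theorem RootedVariant.isMaximalSubtree_of_subtree {T F : PTree α} (hF : RootedVariant T F)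
    {ds : List (PTree α)} (h : Subtree (node ds) F) : IsMaximalSubtree T (node ds) := by
  by_cases hroot : node ds = F
  · subst hroot
    exact ⟨ds, hF, .inl rfl⟩
  obtain ⟨fs, c, rfl, hc, hds⟩ := h.exists_child_of_ne hroot
  obtain ⟨rest, hrest⟩ := hds.exists_reroot_of_mem hc
  exact ⟨ds ++ [node rest], hF.trans hrest, .inr ⟨ds, [], rest, rfl, by simp⟩⟩

theorem IsMaximalSubtree.exists_rootedVariant_subtree {T t : PTree α}
    (h : IsMaximalSubtree T t) : ∃ F, RootedVariant T F ∧ Subtree t F := by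
  obtain ⟨cs, hcs, rfl | ⟨l, r, ds, rfl, rfl⟩⟩ := h
  · exact ⟨node cs, hcs, .refl _⟩
  · exact ⟨node (ds ++ [node (l ++ r)]), hcs.tail (Reroot1.step l r ds),
      .child (by simp) (.refl _)⟩

theorem exists_rootedVariant_oSubtree_iff (T : PTree α) (a : Option (PTree α)) :
    (∃ F, RootedVariant T F ∧ OSubtree F a) ↔
      a = none ∨ (∃ x, a = some (leaf x) ∧ Subtree (leaf x) T) ∨
        ∃ t, a = some t ∧ IsMaximalSubtree T t := by
  constructor
  · rintro ⟨F, hF, ha⟩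
    rcases a with _ | _ | ds
    · exact .inl rfl
    · exact .inr (.inl ⟨_, rfl, hF.subtree_leaf ha⟩)
    · exact .inr (.inr ⟨_, rfl, hF.isMaximalSubtree_of_subtree ha⟩)
  · rintro (rfl | ⟨x, rfl, hx⟩ | ⟨t, rfl, ht⟩)
    · exact ⟨T, .refl, trivial⟩
    · exact ⟨T, .refl, hx⟩
    · exact ht.exists_rootedVariant_subtree

end PTree

theorem maximum_agreement_supertree_stmt18_general
    {α : Type} {k : ℕ} (𝒯 : Fin k → PTree α)
    (A : Fin k → Option (PTree α))
    (hne : ∃ i, A i ≠ none) :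
    (∃ F : Fin k → PTree α,
        (∀ i, PTree.RootedVariant (𝒯 i) (F i)) ∧ PTree.IsSubForest F A)
    ↔ ∀ i, A i = none ∨
        (∃ a : α, A i = some (PTree.leaf a) ∧ PTree.Subtree (PTree.leaf a) (𝒯 i)) ∨
        (∃ t : PTree α, A i = some t ∧ PTree.IsMaximalSubtree (𝒯 i) t) := by
  simp only [← PTree.exists_rootedVariant_oSubtree_iff, Classical.skolem, forall_and,
    PTree.IsSubForest, hne, and_true]

/-- Let `𝒯` be a set of `k` unrooted phylogenetic trees
(each represented by rooting it at an internal node), none having a vertex of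
degree two, and let `𝒪` be the set of all sub-forests of all rooted variants
of `𝒯`.  A set of rooted trees `𝒜` with at least one nonempty element belongs
to `𝒪` if and only if each `𝒜⁽ⁱ⁾` is a trivial tree (a leaf of `𝒯⁽ⁱ⁾` or the
empty tree) or a maximal subtree of `𝒯⁽ⁱ⁾`. -/
theorem maximum_agreement_supertree_stmt18
    {α : Type} [DecidableEq α] {k : ℕ} (𝒯 : Fin k → PTree α)
    (hphylo : ∀ i, (𝒯 i).labelList.Nodup)
    (hrep : ∀ i, PTree.IsUnrootedRep (𝒯 i))
    (A : Fin k → Option (PTree α))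
    (hne : ∃ i, A i ≠ none) :
    (∃ F : Fin k → PTree α,
        (∀ i, PTree.RootedVariant (𝒯 i) (F i)) ∧ PTree.IsSubForest F A)
    ↔ ∀ i, A i = none ∨
        (∃ a : α, A i = some (PTree.leaf a) ∧ PTree.Subtree (PTree.leaf a) (𝒯 i)) ∨
        (∃ t : PTree α, A i = some t ∧ PTree.IsMaximalSubtree (𝒯 i) t) :=
  maximum_agreement_supertree_stmt18_general 𝒯 A hne
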